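/- arXiv:2301.09867 — 4 statements merged into one kernel-verified Lean document; each statement's English description precedes it below -/
import Mathlib

section
/- If H is a quotient of G (i.e., there is a surjective map φ : V(G) → V(H) such that {h₁,h₂} ∈ E(H) iff h₁ = φ(g₁), h₂ = φ(g₂) for some edge {g₁,g₂} ∈ E(G)), then π*(G) ≥ π*(H). -/
open Finset

/-- A single pebbling move: remove two pebbles from `u` and place one on an
adjacent vertex `v`. -/
def PebblingStep {V : Type*} [DecidableEq V] (G : SimpleGraph V) (D D' : V → ℕ) : Prop :=
  ∃ u v, G.Adj u v ∧ 2 ≤ D u ∧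
    D' = Function.update (Function.update D u (D u - 2)) v (D v + 1)

/-- `D'` is obtained from `D` by an executable sequence of pebbling moves. -/
def PebblingReaches {V : Type*} [DecidableEq V] (G : SimpleGraph V) : (V → ℕ) → (V → ℕ) → Prop :=
  Relation.ReflTransGen (PebblingStep G)

/-- A vertex `v` is `k`-reachable under `D`. -/
def KReachable {V : Type*} [DecidableEq V] (G : SimpleGraph V) (D : V → ℕ) (k : ℕ) (v : V) : Prop :=
  ∃ D', PebblingReaches G D D' ∧ k ≤ D' v

/-- A distribution is solvable if every vertex is (1-)reachable. -/
def Solvable {V : Type*} [DecidableEq V] (G : SimpleGraph V) (D : V → ℕ) : Prop :=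
  ∀ v, KReachable G D 1 v

/-- The size of a pebble distribution. -/
def distSize {V : Type*} [Fintype V] (D : V → ℕ) : ℕ := ∑ v, D v

/-- The optimal pebbling number `π*`. -/
noncomputable def optPebbling {V : Type*} [Fintype V] [DecidableEq V] (G : SimpleGraph V) : ℕ :=
  sInf {n | ∃ D : V → ℕ, Solvable G D ∧ distSize D = n}

/-- The `t`-restricted optimal pebbling number `π*_t`. -/
noncomputable def optPebblingRes {V : Type*} [Fintype V] [DecidableEq V]
    (G : SimpleGraph V) (t : ℕ) : ℕ :=
  sInf {n | ∃ D : V → ℕ, (∀ v, D v ≤ t) ∧ Solvable G D ∧ distSize D = n}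

/-!
Collapsing a distribution along `φ` keeps its size, and since `φ` maps edges of `G` to edges
of `H`, it turns every pebbling move on `G` into a pebbling move on `H`. Hence the collapse of
an optimal solvable distribution on `G` is solvable on `H` (every vertex of `H` being the image
of one of `G`), and has size `π*(G)`.
-/

section Collapse

variable {V W : Type*} [Fintype V] [DecidableEq W]

def collapseDist (φ : V → W) (D : V → ℕ) : W → ℕ :=
  fun w => ∑ g with φ g = w, D g

lemma collapseDist_add (φ : V → W) (D E : V → ℕ) :
    collapseDist φ (D + E) = collapseDist φ D + collapseDist φ E := by
  funext w
  simp only [collapseDist, Pi.add_apply, sum_add_distrib]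

lemma collapseDist_single [DecidableEq V] (φ : V → W) (g : V) (n : ℕ) :
    collapseDist φ (Pi.single g n) = Pi.single (φ g) n := by
  funext w
  simp [collapseDist, Pi.single_apply, eq_comm]

lemma le_collapseDist_apply (φ : V → W) (D : V → ℕ) (g : V) :
    D g ≤ collapseDist φ D (φ g) :=
  single_le_sum (fun _ _ => Nat.zero_le _) (mem_filter.2 ⟨mem_univ g, rfl⟩)

lemma distSize_collapseDist [Fintype W] (φ : V → W) (D : V → ℕ) :
    distSize (collapseDist φ D) = distSize D :=
  sum_fiberwise univ φ D

end Collapse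

section Moves

variable {V : Type*} [DecidableEq V] {G : SimpleGraph V} {D D' : V → ℕ}

/-- The additive form of a move is the one that commutes with collapsing. -/
lemma pebblingStep_iff_add :
    PebblingStep G D D' ↔
      ∃ u v, G.Adj u v ∧ 2 ≤ D u ∧ D' + Pi.single u 2 = D + Pi.single v 1 := by
  refine exists₂_congr fun u v => and_congr_right fun huv => and_congr_right fun hDu => ?_
  rw [funext_iff, funext_iff]
  refine forall_congr' fun w => ?_
  simp only [Function.update_apply, Pi.add_apply, Pi.single_apply]
  split_ifs <;> subst_vars <;> first | exact (huv.ne rfl).elim | omega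

variable {W : Type*} [Fintype V] [DecidableEq W] {H : SimpleGraph W}

lemma PebblingStep.collapseDist (f : G →g H) (h : PebblingStep G D D') :
    PebblingStep H (collapseDist f D) (collapseDist f D') := by
  obtain ⟨u, v, huv, hDu, hmove⟩ := pebblingStep_iff_add.1 h
  refine pebblingStep_iff_add.2
    ⟨f u, f v, f.map_adj huv, hDu.trans (le_collapseDist_apply f D u), ?_⟩
  rw [← collapseDist_single, ← collapseDist_single, ← collapseDist_add, ← collapseDist_add,
    hmove]

lemma PebblingReaches.collapseDist (f : G →g H) (h : PebblingReaches G D D') :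
    PebblingReaches H (collapseDist f D) (collapseDist f D') :=
  Relation.ReflTransGen.lift _ (fun _ _ hstep => hstep.collapseDist f) _ _ h

lemma Solvable.collapseDist (f : G →g H) (hf : Function.Surjective f) (hD : Solvable G D) :
    Solvable H (collapseDist f D) := by
  intro w
  obtain ⟨g, rfl⟩ := hf w
  obtain ⟨D', hreach, hg⟩ := hD g
  exact ⟨_, hreach.collapseDist f, hg.trans (le_collapseDist_apply f D' g)⟩

end Moves

section OptPebbling

variable {V : Type*} [Fintype V] [DecidableEq V] {G : SimpleGraph V}

lemma Solvable.optPebbling_le {D : V → ℕ} (hD : Solvable G D) : optPebbling G ≤ distSize D :=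
  Nat.sInf_le ⟨D, hD, rfl⟩

lemma exists_solvable_distSize_eq_optPebbling (G : SimpleGraph V) :
    ∃ D : V → ℕ, Solvable G D ∧ distSize D = optPebbling G :=
  Nat.sInf_mem (s := {n | ∃ D : V → ℕ, Solvable G D ∧ distSize D = n})
    ⟨_, fun _ => 1, fun _ => ⟨_, Relation.ReflTransGen.refl, le_rfl⟩, rfl⟩

end OptPebbling

theorem collapsing {V W : Type*} [Fintype V] [DecidableEq V] [Fintype W] [DecidableEq W]
    (G : SimpleGraph V) (H : SimpleGraph W) (φ : V → W)
    (hsurj : Function.Surjective φ)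
    (hquot : ∀ h₁ h₂, H.Adj h₁ h₂ ↔ ∃ g₁ g₂, G.Adj g₁ g₂ ∧ φ g₁ = h₁ ∧ φ g₂ = h₂) :
    optPebbling H ≤ optPebbling G := by
  let f : G →g H := ⟨φ, fun h => (hquot _ _).2 ⟨_, _, h, rfl, rfl⟩⟩
  obtain ⟨D, hD, hsize⟩ := exists_solvable_distSize_eq_optPebbling G
  calc optPebbling H ≤ distSize (collapseDist f D) := (hD.collapseDist f hsurj).optPebbling_le
    _ = optPebbling G := by rw [distSize_collapseDist, hsize]
end

section
/- Let G be a connected graph with π*_2(G) ≤ 4. Then there exist vertices x and y of G such that the distribution placing 2 pebbles on each of x and y (and 0 elsewhere) is solvable. -/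
open Finset

/-!
An optimal distribution `D` for `π*_2(G) ≤ 4` has at most two pebbles per vertex and at most
four pebbles in total. If no vertex carries two pebbles, no move is possible, so every vertex
carries a pebble, `G` has at most four vertices, and two vertices dominate `G`. If at most two
vertices are occupied, `D` lies below a `(2, 2)`-distribution. The remaining shape is
`2, 1, 1` on vertices `a, b, c`: a move can only start at a doubled vertex, so its few move
sequences show that every vertex lies in `N[a]`, or in `N(b)` (resp. `N(c)`) when `b` (resp. `c`)
can be doubled. A case analysis on the adjacencies among `a, b, c` then gives `x, y` such that
every vertex lies in `N[x] ∪ N[y] ∪ N(m)` for a common neighbour `m` of `x` and `y`, which two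
pebbles on each of `x` and `y` reach through `m`.
-/

namespace SimpleGraph

variable {V : Type*} {G : SimpleGraph V}

theorem Preconnected.mem_of_adj_closed (hconn : G.Preconnected) {S : Set V}
    (hS : ∀ u w, u ∈ S → G.Adj u w → w ∈ S) {u : V} (hu : u ∈ S) (v : V) : v ∈ S := by
  by_contra hv
  obtain ⟨d, -, hd, hd'⟩ := (hconn u v).some.exists_boundary_dart S hu hv
  exact hd' (hS _ _ hd d.adj)

theorem Preconnected.exists_adj_of_ne (hconn : G.Preconnected) {u w : V} (h : u ≠ w) :
    ∃ v, G.Adj u v :=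
  haveI := nontrivial_of_ne u w h
  hconn.exists_adj_of_nontrivial u

theorem eq_of_adj_of_not_adj_of_no_common_adj {a b c : V}
    (hS : ∀ v, v = a ∨ v = b ∨ v = c ∨ G.Adj a v)
    (hnab : ¬G.Adj a b) (hne : ¬∃ e, G.Adj a e ∧ G.Adj e b) {g : V} (hbg : G.Adj b g) :
    g = c := by
  rcases hS g with rfl | rfl | rfl | hag
  · exact absurd hbg.symm hnab
  · exact absurd hbg (G.loopless.irrefl _)
  · rfl
  · exact absurd ⟨g, hag, hbg.symm⟩ hne

theorem Connected.exists_dominating_pair_of_card_le_four [Fintype V] (hconn : G.Connected)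
    (hcard : Fintype.card V ≤ 4) : ∃ x y, ∀ v, v = x ∨ v = y ∨ G.Adj x v ∨ G.Adj y v := by
  by_cases hdeg : ∃ x u w, u ≠ w ∧ G.Adj x u ∧ G.Adj x w
  · obtain ⟨x, u, w, huw, hxu, hxw⟩ := hdeg
    by_cases hall : ∀ v, v = x ∨ G.Adj x v
    · exact ⟨x, x, fun v => by have := hall v; tauto⟩
    push Not at hall
    obtain ⟨z, hzx, hxz⟩ := hall
    -- `x`, `u`, `w` and `z` already use up all four vertices
    have hz : ∀ v, v ≠ x → ¬G.Adj x v → v = z := by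
      intro v hvx hxv
      by_contra hvz
      have hnodup : [x, u, w, z, v].Nodup := by
        have := hxu.ne; have := hxw.ne
        have : u ≠ z := by rintro rfl; exact hxz hxu
        have : u ≠ v := by rintro rfl; exact hxv hxu
        have : w ≠ z := by rintro rfl; exact hxz hxw
        have : w ≠ v := by rintro rfl; exact hxv hxw
        simp [*, hzx.symm, hvx.symm, Ne.symm hvz]
      classical
      have := (List.toFinset_card_of_nodup hnodup).symm.trans_le (Finset.card_le_univ _)
      simp only [List.length_cons, List.length_nil] at this
      omega
    obtain ⟨y, hzy⟩ := hconn.preconnected.exists_adj_of_ne hzx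
    refine ⟨x, y, fun v => ?_⟩
    by_cases hv : v = x ∨ G.Adj x v
    · tauto
    · push Not at hv
      obtain rfl := hz v hv.1 hv.2
      exact .inr <| .inr <| .inr hzy.symm
  · push Not at hdeg
    obtain ⟨p⟩ := hconn.nonempty
    by_cases hone : ∀ v, v = p
    · exact ⟨p, p, fun v => .inl (hone v)⟩
    push Not at hone
    obtain ⟨r, hrp⟩ := hone
    obtain ⟨q, hpq⟩ := hconn.preconnected.exists_adj_of_ne hrp.symm
    have hclosed : ∀ u w, u ∈ ({p, q} : Set V) → G.Adj u w → w ∈ ({p, q} : Set V) := by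
      rintro u w (rfl | rfl) huw
      · exact .inr (by_contra fun hwq => hdeg u q w (Ne.symm hwq) hpq huw)
      · exact .inl (by_contra fun hwp => hdeg u p w (Ne.symm hwp) hpq.symm huw)
    refine ⟨p, q, fun v => ?_⟩
    rcases hconn.preconnected.mem_of_adj_closed hclosed (Set.mem_insert p {q}) v with h | h
    · exact .inl h
    · exact .inr (.inl h)

end SimpleGraph

section Moves

variable {V : Type*} [DecidableEq V] {G : SimpleGraph V} {D E D' : V → ℕ} {k : ℕ} {u v : V}

theorem exists_pebblingStep {t : V} (hadj : G.Adj u t) (hu : 2 ≤ D u) :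
    ∃ D', PebblingStep G D D' ∧ D' u = D u - 2 ∧ D' t = D t + 1 ∧
      ∀ w, w ≠ u → w ≠ t → D' w = D w :=
  ⟨_, ⟨u, t, hadj, hu, rfl⟩, by simp [hadj.ne], by simp, fun w hwu hwt => by simp [hwu, hwt]⟩

theorem pebblingStep_iff :
    PebblingStep G D D' ↔ ∃ u t, G.Adj u t ∧ 2 ≤ D u ∧ D' u = D u - 2 ∧ D' t = D t + 1 ∧
      ∀ w, w ≠ u → w ≠ t → D' w = D w := by
  constructor
  · rintro ⟨u, t, hadj, hu, rfl⟩
    exact ⟨u, t, hadj, hu, by simp [hadj.ne], by simp, fun w hwu hwt => by simp [hwu, hwt]⟩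
  · rintro ⟨u, t, hadj, hu, hD'u, hD't, hD'w⟩
    refine ⟨u, t, hadj, hu, funext fun w => ?_⟩
    by_cases hwt : w = t
    · simp [hwt, hD't]
    · by_cases hwu : w = u
      · simp [hwu, hadj.ne, hD'u]
      · simp [hwt, hwu, hD'w w hwu hwt]

theorem PebblingReaches.exists_le_of_le (hle : D ≤ E) (h : PebblingReaches G D D') :
    ∃ E', PebblingReaches G E E' ∧ D' ≤ E' := by
  induction h with
  | refl => exact ⟨E, .refl, hle⟩
  | tail _ hstep ih =>
    obtain ⟨E', hE', hle'⟩ := ih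
    obtain ⟨u, t, hadj, hu, hu', ht', hw'⟩ := pebblingStep_iff.1 hstep
    have hEu : _ ≤ E' u := hle' u
    obtain ⟨E'', hstep', hEu', hEt', hEw'⟩ := exists_pebblingStep hadj (hu.trans hEu)
    refine ⟨_, hE'.tail hstep', fun w => show _ ≤ E'' w from ?_⟩
    by_cases hwu : w = u
    · rw [hwu, hu', hEu']; omega
    by_cases hwt : w = t
    · have hEt : _ ≤ E' t := hle' t
      rw [hwt, ht', hEt']; omega
    rw [hw' w hwu hwt, hEw' w hwu hwt]
    exact hle' w

theorem KReachable.mono (hle : D ≤ E) (h : KReachable G D k v) : KReachable G E k v := by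
  obtain ⟨D', hD', hv⟩ := h
  obtain ⟨E', hE', hle'⟩ := hD'.exists_le_of_le hle
  exact ⟨E', hE', hv.trans (hle' v)⟩

theorem Solvable.mono (hle : D ≤ E) (h : Solvable G D) : Solvable G E :=
  fun v => (h v).mono hle

theorem PebblingReaches.eq_of_le_one (hD : ∀ w, D w ≤ 1) (h : PebblingReaches G D D') :
    D' = D := by
  induction h with
  | refl => rfl
  | tail _ hstep ih =>
    obtain ⟨u, -, -, hu, -⟩ := hstep
    subst ih
    exact absurd hu (by have := hD u; omega)

theorem KReachable.le_of_le_one (hD : ∀ w, D w ≤ 1) (h : KReachable G D k v) : k ≤ D v := by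
  obtain ⟨D', hD', hv⟩ := h
  rwa [hD'.eq_of_le_one hD] at hv

theorem KReachable.le_or_exists_step (h : KReachable G D k v) :
    k ≤ D v ∨ ∃ u t D', G.Adj u t ∧ 2 ≤ D u ∧ D' u = D u - 2 ∧ D' t = D t + 1 ∧
      (∀ w, w ≠ u → w ≠ t → D' w = D w) ∧ KReachable G D' k v := by
  obtain ⟨F, hF, hv⟩ := h
  rcases hF.cases_head with rfl | ⟨D', hstep, hD'F⟩
  · exact .inl hv
  · obtain ⟨u, t, hadj, hu, hu', ht', hw'⟩ := pebblingStep_iff.1 hstep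
    exact .inr ⟨u, t, D', hadj, hu, hu', ht', hw', F, hD'F, hv⟩

theorem kReachable_one_of_le (hv : 1 ≤ D v) : KReachable G D 1 v :=
  ⟨D, .refl, hv⟩

theorem kReachable_one_of_adj (hu : 2 ≤ D u) (hadj : G.Adj u v) : KReachable G D 1 v := by
  obtain ⟨D', hstep, -, hv, -⟩ := exists_pebblingStep hadj hu
  exact ⟨D', .single hstep, by omega⟩

theorem kReachable_one_of_common_adj {x y m : V} (hx : 2 ≤ D x) (hy : 2 ≤ D y) (hxy : x ≠ y)
    (hxm : G.Adj x m) (hym : G.Adj y m) (hmv : G.Adj m v) : KReachable G D 1 v := by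
  obtain ⟨D₁, hstep₁, -, hm₁, hw₁⟩ := exists_pebblingStep hxm hx
  have hy₁ : 2 ≤ D₁ y := by rw [hw₁ y hxy.symm hym.ne]; exact hy
  obtain ⟨D₂, hstep₂, -, hm₂, -⟩ := exists_pebblingStep hym hy₁
  obtain ⟨D₃, hD₃, hv⟩ := kReachable_one_of_adj (G := G) (D := D₂) (by omega) hmv
  exact ⟨D₃, .head hstep₁ (.head hstep₂ hD₃), hv⟩

end Moves

section SmallDistributions

variable {V : Type*} [DecidableEq V] {G : SimpleGraph V} {D : V → ℕ} {v : V}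

theorem KReachable.eq_or_adj_of_two_pebbles {p : V} (hp : D p ≤ 2)
    (hD : ∀ w, w ≠ p → D w = 0) (h : KReachable G D 1 v) : v = p ∨ G.Adj p v := by
  rcases h.le_or_exists_step with hv | ⟨u, t, D', hut, hu, hu', ht', hw', h'⟩
  · grind +splitImp
  · have := hut.ne
    obtain rfl : u = p := by grind +splitImp
    have hv' : 1 ≤ D' v := h'.le_of_le_one (by grind +splitImp)
    grind +splitImp

theorem KReachable.cases_of_three_pebbles {p q : V} (hp : D p ≤ 2) (hq : D q ≤ 1)
    (hD : ∀ w, w ≠ p → w ≠ q → D w = 0) (h : KReachable G D 1 v) :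
    v = p ∨ v = q ∨ G.Adj p v ∨ (G.Adj p q ∧ G.Adj q v) := by
  rcases h.le_or_exists_step with hv | ⟨u, t, D', hut, hu, hu', ht', hw', h'⟩
  · grind +splitImp
  have := hut.ne
  obtain rfl : u = p := by grind +splitImp
  by_cases htq : t = q
  · subst htq
    have := h'.eq_or_adj_of_two_pebbles (p := t) (by omega) (by grind +splitImp)
    grind +splitImp
  · have hv' : 1 ≤ D' v := h'.le_of_le_one (by grind +splitImp)
    grind +splitImp

theorem KReachable.cases_of_four_pebbles {a b c : V} (hbc : b ≠ c) (ha : D a ≤ 2)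
    (hb : D b ≤ 1) (hc : D c ≤ 1) (hD : ∀ w, w ≠ a → w ≠ b → w ≠ c → D w = 0)
    (h : KReachable G D 1 v) :
    v = a ∨ v = b ∨ v = c ∨ G.Adj a v ∨ (G.Adj a b ∧ (G.Adj b v ∨ G.Adj b c ∧ G.Adj c v)) ∨
      (G.Adj a c ∧ (G.Adj c v ∨ G.Adj c b ∧ G.Adj b v)) := by
  rcases h.le_or_exists_step with hv | ⟨u, t, D', hut, hu, hu', ht', hw', h'⟩
  · grind +splitImp
  have := hut.ne
  obtain rfl : u = a := by grind +splitImp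
  by_cases htb : t = b
  · subst htb
    have := h'.cases_of_three_pebbles (p := t) (q := c) (by omega) (by grind +splitImp)
      (by grind +splitImp)
    grind +splitImp
  by_cases htc : t = c
  · subst htc
    have := h'.cases_of_three_pebbles (p := t) (q := b) (by omega) (by grind +splitImp)
      (by grind +splitImp)
    grind +splitImp
  · have hv' : 1 ≤ D' v := h'.le_of_le_one (by grind +splitImp)
    grind +splitImp

end SmallDistributions

section PairDistributions

variable {V : Type*} [DecidableEq V] {G : SimpleGraph V} {x y m : V}

theorem solvable_pair_of_dominating (hdom : ∀ v, v = x ∨ v = y ∨ G.Adj x v ∨ G.Adj y v) :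
    Solvable G (fun v => if v = x ∨ v = y then 2 else 0) := by
  intro v
  rcases hdom v with rfl | rfl | hxv | hyv
  · exact kReachable_one_of_le (by simp)
  · exact kReachable_one_of_le (by simp)
  · exact kReachable_one_of_adj (by simp) hxv
  · exact kReachable_one_of_adj (by simp) hyv

theorem solvable_pair_of_path (hxy : x ≠ y) (hxm : G.Adj x m) (hmy : G.Adj m y)
    (hcov : ∀ v, v = x ∨ v = y ∨ v = m ∨ G.Adj x v ∨ G.Adj y v ∨ G.Adj m v) :
    Solvable G (fun v => if v = x ∨ v = y then 2 else 0) := by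
  intro v
  rcases hcov v with rfl | rfl | rfl | hxv | hyv | hmv
  · exact kReachable_one_of_le (by simp)
  · exact kReachable_one_of_le (by simp)
  · exact kReachable_one_of_adj (by simp) hxm
  · exact kReachable_one_of_adj (by simp) hxv
  · exact kReachable_one_of_adj (by simp) hyv
  · exact kReachable_one_of_common_adj (by simp) (by simp) hxy hxm hmy.symm hmv

end PairDistributions

section FourPebbles

variable {V : Type*} [DecidableEq V] {G : SimpleGraph V} {a b c : V}

theorem exists_solvable_pair_of_adj_of_not_adj (hconn : G.Preconnected) (hac : a ≠ c)
    (hab : G.Adj a b) (hnac : ¬G.Adj a c)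
    (hS : ∀ v, v = a ∨ v = b ∨ v = c ∨ G.Adj a v ∨ G.Adj b v ∨ (G.Adj b c ∧ G.Adj c v)) :
    ∃ x y, Solvable G (fun v => if v = x ∨ v = y then 2 else 0) := by
  by_cases hbc : G.Adj b c
  · exact ⟨a, c, solvable_pair_of_path hac hab hbc fun v => by have := hS v; tauto⟩
  have hcov : ∀ v, v = a ∨ v = b ∨ v = c ∨ G.Adj a v ∨ G.Adj b v := fun v => by
    have := hS v; tauto
  obtain ⟨d, hcd⟩ := hconn.exists_adj_of_ne hac.symm
  have hcov' : ∀ v, v = d ∨ v = a ∨ v = b ∨ G.Adj d v ∨ G.Adj a v ∨ G.Adj b v := fun v => by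
    rcases eq_or_ne v c with rfl | hvc
    · exact .inr <| .inr <| .inr <| .inl hcd.symm
    · have := hcov v; tauto
  rcases hcov d with rfl | rfl | rfl | had | hbd
  · exact absurd hcd.symm hnac
  · exact absurd hcd.symm hbc
  · exact absurd hcd (G.loopless.irrefl _)
  · have hdb : d ≠ b := by rintro rfl; exact hbc hcd.symm
    exact ⟨d, b, solvable_pair_of_path hdb had.symm hab fun v => by have := hcov' v; tauto⟩
  · have had : a ≠ d := by rintro rfl; exact hnac hcd.symm
    exact ⟨a, d, solvable_pair_of_path had hab hbd fun v => by have := hcov' v; tauto⟩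

theorem exists_solvable_pair_of_not_adj_of_not_adj (hconn : G.Preconnected) (hab : a ≠ b)
    (hac : a ≠ c) (hnab : ¬G.Adj a b) (hnac : ¬G.Adj a c)
    (hS : ∀ v, v = a ∨ v = b ∨ v = c ∨ G.Adj a v) :
    ∃ x y, Solvable G (fun v => if v = x ∨ v = y then 2 else 0) := by
  have hS' : ∀ v, v = a ∨ v = c ∨ v = b ∨ G.Adj a v := fun v => by have := hS v; tauto
  by_cases he : ∃ e, G.Adj a e ∧ G.Adj e b <;> by_cases hf : ∃ f, G.Adj a f ∧ G.Adj f c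
  · obtain ⟨⟨e, hae, heb⟩, ⟨f, haf, hfc⟩⟩ := And.intro he hf
    rcases eq_or_ne e f with rfl | hef
    · refine ⟨a, e, solvable_pair_of_dominating fun v => ?_⟩
      rcases hS v with rfl | rfl | rfl | hav <;> simp [*]
    · refine ⟨e, f, solvable_pair_of_path hef hae.symm haf fun v => ?_⟩
      rcases hS v with rfl | rfl | rfl | hav <;> simp [*]
  · obtain ⟨g, hcg⟩ := hconn.exists_adj_of_ne hac.symm
    have hcb : G.Adj c b := G.eq_of_adj_of_not_adj_of_no_common_adj hS' hnac hf hcg ▸ hcg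
    refine ⟨a, b, solvable_pair_of_dominating fun v => ?_⟩
    rcases hS v with rfl | rfl | rfl | hav <;> simp [hcb.symm, *]
  · obtain ⟨g, hbg⟩ := hconn.exists_adj_of_ne hab.symm
    have hbc : G.Adj b c := G.eq_of_adj_of_not_adj_of_no_common_adj hS hnab he hbg ▸ hbg
    refine ⟨a, c, solvable_pair_of_dominating fun v => ?_⟩
    rcases hS v with rfl | rfl | rfl | hav <;> simp [hbc.symm, *]
  · have hclosed : ∀ u w, u ∈ ({b, c} : Set V) → G.Adj u w → w ∈ ({b, c} : Set V) := by
      rintro u w (rfl | rfl) huw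
      · simp [G.eq_of_adj_of_not_adj_of_no_common_adj hS hnab he huw]
      · simp [G.eq_of_adj_of_not_adj_of_no_common_adj hS' hnac hf huw]
    rcases hconn.mem_of_adj_closed hclosed (Set.mem_insert b {c}) a with rfl | rfl
    · exact (hab rfl).elim
    · exact (hac rfl).elim

theorem exists_solvable_pair_of_four_pebbles (hconn : G.Preconnected) {D : V → ℕ}
    (hab : a ≠ b) (hac : a ≠ c) (hbc : b ≠ c) (ha : D a ≤ 2) (hb : D b ≤ 1) (hc : D c ≤ 1)
    (hD : ∀ w, w ≠ a → w ≠ b → w ≠ c → D w = 0) (hsolv : Solvable G D) :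
    ∃ x y, Solvable G (fun v => if v = x ∨ v = y then 2 else 0) := by
  have hS := fun v => (hsolv v).cases_of_four_pebbles hbc ha hb hc hD
  by_cases hab' : G.Adj a b <;> by_cases hac' : G.Adj a c
  · exact ⟨b, c, solvable_pair_of_path hbc hab'.symm hac' fun v => by have := hS v; tauto⟩
  · exact exists_solvable_pair_of_adj_of_not_adj hconn hac hab' hac' fun v => by
      have := hS v; tauto
  · exact exists_solvable_pair_of_adj_of_not_adj hconn hab hac' hab' fun v => by
      have := hS v; tauto
  · exact exists_solvable_pair_of_not_adj_of_not_adj hconn hab hac hab' hac' fun v => by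
      have := hS v; tauto

end FourPebbles

section Counting

variable {V : Type*} [Fintype V]

theorem sum_le_distSize (D : V → ℕ) (s : Finset V) : ∑ v ∈ s, D v ≤ distSize D :=
  Finset.sum_le_sum_of_subset (Finset.subset_univ s)

variable [DecidableEq V]

theorem exists_solvable_of_optPebblingRes_le {G : SimpleGraph V} {t n : ℕ} (ht : 1 ≤ t)
    (h : optPebblingRes G t ≤ n) :
    ∃ D : V → ℕ, (∀ v, D v ≤ t) ∧ Solvable G D ∧ distSize D ≤ n := by
  have hne : {n | ∃ D : V → ℕ, (∀ v, D v ≤ t) ∧ Solvable G D ∧ distSize D = n}.Nonempty :=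
    ⟨_, fun _ => t, fun _ => le_rfl, fun _ => kReachable_one_of_le ht, rfl⟩
  obtain ⟨D, hDt, hsolv, hsize⟩ := Nat.sInf_mem hne
  exact ⟨D, hDt, hsolv, hsize.trans_le h⟩

theorem le_pair_or_le_four_pebbles_or_le_one {D : V → ℕ} (hD : ∀ v, D v ≤ 2)
    (hsize : distSize D ≤ 4) :
    (∃ x y, D ≤ fun v => if v = x ∨ v = y then 2 else 0) ∨
    (∃ a b c, a ≠ b ∧ a ≠ c ∧ b ≠ c ∧ D b ≤ 1 ∧ D c ≤ 1 ∧
      ∀ w, w ≠ a → w ≠ b → w ≠ c → D w = 0) ∨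
    ∀ v, D v ≤ 1 := by
  by_cases hle : ∀ v, D v ≤ 1
  · exact .inr (.inr hle)
  obtain ⟨a, ha⟩ : ∃ a, 2 ≤ D a := by push Not at hle; exact hle
  by_cases hbc : ∃ b c, b ≠ a ∧ c ≠ a ∧ b ≠ c ∧ 1 ≤ D b ∧ 1 ≤ D c
  · obtain ⟨b, c, hba, hca, hbc, hb, hc⟩ := hbc
    have habc := sum_le_distSize D {a, b, c}
    rw [Finset.sum_insert (by simp [hba.symm, hca.symm]), Finset.sum_pair hbc] at habc
    refine .inr (.inl ⟨a, b, c, hba.symm, hca.symm, hbc, by omega, by omega,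
      fun w hwa hwb hwc => ?_⟩)
    have habcw := sum_le_distSize D {w, a, b, c}
    rw [Finset.sum_insert (by simp [hwa, hwb, hwc]),
      Finset.sum_insert (by simp [hba.symm, hca.symm]), Finset.sum_pair hbc] at habcw
    omega
  push Not at hbc
  refine .inl ?_
  by_cases hb : ∃ b, b ≠ a ∧ 1 ≤ D b
  · obtain ⟨b, hba, hb⟩ := hb
    refine ⟨a, b, fun v => show D v ≤ ite _ _ _ from ?_⟩
    split_ifs with hv
    · exact hD v
    · have := hbc b v hba (by tauto) (by tauto) hb
      omega
  · push Not at hb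
    refine ⟨a, a, fun v => show D v ≤ ite _ _ _ from ?_⟩
    split_ifs with hv
    · exact hD v
    · have := hb v (by tauto)
      omega

theorem card_le_distSize_of_solvable {G : SimpleGraph V} {D : V → ℕ} (hD : ∀ v, D v ≤ 1)
    (hsolv : Solvable G D) : Fintype.card V ≤ distSize D := by
  have h1 : ∀ v, 1 ≤ D v := fun v => (hsolv v).le_of_le_one hD
  simpa [distSize] using Finset.sum_le_sum fun v (_ : v ∈ Finset.univ) => h1 v

end Counting

theorem exists_two_two_distribution_of_restricted_le_four
    {V : Type*} [Fintype V] [DecidableEq V] (G : SimpleGraph V)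
    (hconn : G.Connected) (h : optPebblingRes G 2 ≤ 4) :
    ∃ x y : V, Solvable G (fun v => if v = x ∨ v = y then 2 else 0) := by
  obtain ⟨D, hD, hsolv, hsize⟩ := exists_solvable_of_optPebblingRes_le one_le_two h
  rcases le_pair_or_le_four_pebbles_or_le_one hD hsize with
    ⟨x, y, hle⟩ | ⟨a, b, c, hab, hac, hbc, hb, hc, hrest⟩ | hle
  · exact ⟨x, y, hsolv.mono hle⟩
  · exact exists_solvable_pair_of_four_pebbles hconn.preconnected hab hac hbc (hD a) hb hc hrest
      hsolv
  · obtain ⟨x, y, hdom⟩ := hconn.exists_dominating_pair_of_card_le_four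
      ((card_le_distSize_of_solvable hle hsolv).trans hsize)
    exact ⟨x, y, solvable_pair_of_dominating hdom⟩
end

section
/- For the graph H_m (m ≥ 4 even), π*_2(H_m) ≥ 5; combined with the upper bound, π*_2(H_m) = 5. -/
open Finset

/-- The base relation for the graph `H_m`.  Vertices `Sum.inl i` are `u_{i+1}`,
vertices `Sum.inr (Sum.inl i)` are `v_{i+1}`, and `Sum.inr (Sum.inr ())` is `w`
(so 0-based index `i` corresponds to the paper's index `i+1`; the paper's odd
indices are the 0-based even ones). Within each copy of `K_m`, the matching
pairs `{2k, 2k+1}` (0-based) are the removed edges. -/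
def HmRel (m : ℕ) : (Fin m ⊕ (Fin m ⊕ Unit)) → (Fin m ⊕ (Fin m ⊕ Unit)) → Prop
  | .inl i, .inl j => i.val / 2 ≠ j.val / 2
  | .inr (.inl i), .inr (.inl j) => i.val / 2 ≠ j.val / 2
  | .inl i, .inr (.inl j) => i = j ∧ i.val % 2 = 1
  | .inl i, .inr (.inr _) => i.val % 2 = 0
  | .inr (.inl i), .inr (.inr _) => i.val % 2 = 0
  | _, _ => False

/-- The graph `H_m` from the paper. -/
def Hm (m : ℕ) : SimpleGraph (Fin m ⊕ (Fin m ⊕ Unit)) := SimpleGraph.fromRel (HmRel m)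

/-- The vertex `w` of `H_m`. -/
def hmW (m : ℕ) : Fin m ⊕ (Fin m ⊕ Unit) := Sum.inr (Sum.inr ())

/-!
Five pebbles suffice: from two pebbles on `w`, two on `u_2` and one on `v_2` every vertex is
reached in at most two moves.

For the lower bound, a pebble can be moved to `t` from a distribution of at most four pebbles only
if the distribution contains one of six small patterns around `t` (`ReachPattern`). This is proved
backwards along the moves: after a move at most three pebbles are left, so only the three smallest
patterns can occur, and undoing the move turns each of them into a pattern again. A 2-restricted
distribution of four pebbles has no doubled vertex, or one doubled vertex and at most two single
pebbles, or two doubled vertices and nothing else. In each case some vertex of `H_m` lies outside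
every pattern: `w`, a vertex of the block of a pebbled vertex in one of the two copies of `K_m`, or
one of the fixed vertices `u_4`, `v_4`.
-/

lemma List.Nodup.sum_map_le_sum {V : Type*} [DecidableEq V] [Fintype V] {l : List V}
    (hl : l.Nodup) (D : V → ℕ) : (l.map D).sum ≤ ∑ v, D v := by
  rw [← List.sum_toFinset D hl]
  exact Finset.sum_le_sum_of_subset (Finset.subset_univ _)

section ReachPattern

variable {V : Type*} {G : SimpleGraph V} {D D' : V → ℕ} {a b t : V}

/-- The configurations of at most three pebbles from which a pebble can be moved to `t`. -/
def ReachPattern₃ (G : SimpleGraph V) (D : V → ℕ) (t : V) : Prop :=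
  1 ≤ D t ∨ (∃ u, G.Adj t u ∧ 2 ≤ D u) ∨ ∃ u x, G.Adj t u ∧ G.Adj u x ∧ 1 ≤ D u ∧ 2 ≤ D x

/-- The configurations of at most four pebbles from which a pebble can be moved to `t`. -/
def ReachPattern (G : SimpleGraph V) (D : V → ℕ) (t : V) : Prop :=
  ReachPattern₃ G D t
  ∨ (∃ u x y, G.Adj t u ∧ G.Adj u x ∧ G.Adj x y ∧ 1 ≤ D u ∧ 1 ≤ D x ∧ 2 ≤ D y)
  ∨ (∃ u x y, G.Adj t u ∧ G.Adj u x ∧ G.Adj u y ∧ x ≠ y ∧ 2 ≤ D x ∧ 2 ≤ D y)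
  ∨ (∃ u x, G.Adj t u ∧ G.Adj u x ∧ 4 ≤ D x)

/-- `D'` is bounded by the distribution obtained from `D` by a move from `a` to `b`. -/
structure LeAfterMove (G : SimpleGraph V) (D D' : V → ℕ) (a b : V) : Prop where
  adj : G.Adj a b
  source : D' a + 2 ≤ D a
  target : D' b ≤ D b + 1
  le_of_ne : ∀ x, x ≠ b → D' x ≤ D x

lemma ReachPattern.of_leAfterMove (hm : LeAfterMove G D D' a b) (h : ReachPattern₃ G D' t) :
    ReachPattern G D t := by
  have hsrc := hm.source
  have htgt := hm.target
  rcases h with ht | ⟨u, htu, hu⟩ | ⟨u, x, htu, hux, hu, hx⟩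
  · by_cases htb : t = b
    · subst htb; exact .inl <| .inr <| .inl ⟨a, hm.adj.symm, by omega⟩
    · exact .inl <| .inl <| ht.trans (hm.le_of_ne t htb)
  · by_cases hub : u = b
    · subst hub; exact .inl <| .inr <| .inr ⟨u, a, htu, hm.adj.symm, by omega, by omega⟩
    · exact .inl <| .inr <| .inl ⟨u, htu, hu.trans (hm.le_of_ne u hub)⟩
  by_cases hub : u = b
  · subst hub
    have hx' := hx.trans (hm.le_of_ne x hux.ne')
    by_cases hxa : x = a
    · subst hxa; exact .inr <| .inr <| .inr ⟨u, x, htu, hux, by omega⟩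
    · exact .inr <| .inr <| .inl
        ⟨u, x, a, htu, hux, hm.adj.symm, hxa, hx', by omega⟩
  have hu' := hu.trans (hm.le_of_ne u hub)
  by_cases hxb : x = b
  · subst hxb
    exact .inr <| .inl ⟨u, x, a, htu, hux, hm.adj.symm, hu', by omega, by omega⟩
  · exact .inl <| .inr <| .inr ⟨u, x, htu, hux, hu', hx.trans (hm.le_of_ne x hxb)⟩

variable [DecidableEq V]

lemma PebblingStep.exists_leAfterMove (h : PebblingStep G D D') :
    ∃ a b, LeAfterMove G D D' a b := by
  obtain ⟨a, b, hab, ha, rfl⟩ := h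
  refine ⟨a, b, ⟨hab, ?_, by simp, fun x hx => ?_⟩⟩
  · simp [Function.update_of_ne hab.ne]; omega
  · by_cases hxa : x = a
    · subst hxa; simp [Function.update_of_ne hx]
    · simp [Function.update_of_ne hx, Function.update_of_ne hxa]

variable [Fintype V]

lemma PebblingStep.sum_add_one (h : PebblingStep G D D') : ∑ v, D' v + 1 = ∑ v, D v := by
  obtain ⟨a, b, hab, ha, rfl⟩ := h
  have ha' : a ∈ Finset.univ \ {b} := by simpa using hab.ne
  rw [Finset.sum_update_of_mem (Finset.mem_univ b), Finset.sum_update_of_mem ha',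
    Finset.sum_eq_sum_sdiff_singleton_add (Finset.mem_univ b) D,
    Finset.sum_eq_sum_sdiff_singleton_add ha' D]
  omega

lemma ReachPattern.reachPattern₃_of_sum_le_three (hsum : ∑ v, D v ≤ 3)
    (h : ReachPattern G D t) : ReachPattern₃ G D t := by
  rcases h with h | ⟨u, x, y, htu, hux, hxy, hu, hx, hy⟩ | ⟨-, x, y, -, -, -, hxy, hx, hy⟩ |
    ⟨-, x, -, -, hx⟩
  · exact h
  · by_cases huy : u = y
    · subst huy; exact .inr (.inl ⟨u, htu, hy⟩)
    have := (show [u, x, y].Nodup by simp [hux.ne, hxy.ne, huy]).sum_map_le_sum D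
    simp at this; omega
  · have := (show [x, y].Nodup by simp [hxy]).sum_map_le_sum D
    simp at this; omega
  · have := Finset.single_le_sum (fun v _ => Nat.zero_le (D v)) (Finset.mem_univ x)
    omega

lemma ReachPattern.of_kReachable (hsum : ∑ v, D v ≤ 4) (h : KReachable G D 1 t) :
    ReachPattern G D t := by
  obtain ⟨D', hreach, ht⟩ := h
  induction hreach using Relation.ReflTransGen.head_induction_on with
  | refl => exact .inl (.inl ht)
  | head hstep _ ih =>
    obtain ⟨a, b, hm⟩ := PebblingStep.exists_leAfterMove hstep
    have hsum' := PebblingStep.sum_add_one hstep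
    exact .of_leAfterMove hm ((ih (by omega)).reachPattern₃_of_sum_le_three (by omega))

end ReachPattern

section Avoid

variable {V : Type*} {G : SimpleGraph V} {D : V → ℕ} {a b c d t : V}

/-- With two pebbles on `c`, at most one on each of `a` and `b` and none elsewhere, no pebble
can reach `t`. -/
def AvoidsOneDouble (G : SimpleGraph V) (c a b t : V) : Prop :=
  t ≠ c ∧ t ≠ a ∧ t ≠ b ∧ ¬G.Adj t c ∧
    (¬G.Adj t a ∨ ¬G.Adj a c ∧ (¬G.Adj a b ∨ ¬G.Adj b c)) ∧
    (¬G.Adj t b ∨ ¬G.Adj b c ∧ (¬G.Adj b a ∨ ¬G.Adj a c))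

/-- With two pebbles on each of `c` and `d` and none elsewhere, no pebble can reach `t`. -/
def AvoidsTwoDoubles (G : SimpleGraph V) (c d t : V) : Prop :=
  t ≠ c ∧ t ≠ d ∧ ¬G.Adj t c ∧ ¬G.Adj t d ∧ ∀ u, G.Adj t u → ¬(G.Adj u c ∧ G.Adj u d)

lemma AvoidsOneDouble.map {W : Type*} {G' : SimpleGraph W} (f : G ≃g G')
    (h : AvoidsOneDouble G c a b t) : AvoidsOneDouble G' (f c) (f a) (f b) (f t) := by
  simpa [AvoidsOneDouble, f.map_adj_iff] using h

lemma AvoidsTwoDoubles.map {W : Type*} {G' : SimpleGraph W} (f : G ≃g G')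
    (h : AvoidsTwoDoubles G c d t) : AvoidsTwoDoubles G' (f c) (f d) (f t) := by
  obtain ⟨htc, htd, hadjc, hadjd, hcommon⟩ := h
  refine ⟨by simpa using htc, by simpa using htd, by simpa [f.map_adj_iff] using hadjc,
    by simpa [f.map_adj_iff] using hadjd, fun u htu hu => ?_⟩
  rw [← f.apply_symm_apply u, f.map_adj_iff] at htu hu
  rw [f.map_adj_iff] at hu
  exact hcommon _ htu hu

lemma AvoidsTwoDoubles.symm (h : AvoidsTwoDoubles G c d t) : AvoidsTwoDoubles G d c t :=
  ⟨h.2.1, h.1, h.2.2.2.1, h.2.2.1, fun u htu hu => h.2.2.2.2 u htu hu.symm⟩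

lemma not_reachPattern_of_le_one (hD : ∀ v, D v ≤ 1) (ht : D t = 0) :
    ¬ReachPattern G D t := by
  rintro ((h | ⟨u, -, hu⟩ | ⟨-, x, -, -, -, hx⟩) | ⟨-, -, y, -, -, -, -, -, hy⟩ |
    ⟨-, x, -, -, -, -, -, hx, -⟩ | ⟨-, x, -, -, hx⟩)
  · omega
  · exact absurd (hD u) (by omega)
  all_goals first | exact absurd (hD x) (by omega) | exact absurd (hD y) (by omega)

lemma AvoidsOneDouble.not_reachPattern (hcap : ∀ v, D v ≤ 2) (hone : ∀ v, v ≠ c → D v ≤ 1)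
    (hzero : ∀ v, v ≠ c → v ≠ a → v ≠ b → D v = 0) (h : AvoidsOneDouble G c a b t) :
    ¬ReachPattern G D t := by
  obtain ⟨htc, hta, htb, hadj, ha, hb⟩ := h
  have hdouble : ∀ z, 2 ≤ D z → z = c := fun z hz => by
    by_contra hzc; have := hone z hzc; omega
  have hpos : ∀ z, 1 ≤ D z → z = c ∨ z = a ∨ z = b := fun z hz => by
    by_contra! h; have := hzero z h.1 h.2.1 h.2.2; omega
  rintro ((h | ⟨u, htu, hu⟩ | ⟨u, x, htu, hux, hu, hx⟩) | ⟨u, x, y, htu, hux, hxy, hu, hx, hy⟩ |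
    ⟨u, x, y, -, -, -, hxy, hx, hy⟩ | ⟨u, x, -, -, hx⟩)
  · have := hzero t htc hta htb; omega
  · exact hadj (hdouble u hu ▸ htu)
  · obtain rfl := hdouble x hx
    rcases hpos u (by omega) with rfl | rfl | rfl
    · exact hadj htu
    · exact ha.elim (· htu) (·.1 hux)
    · exact hb.elim (· htu) (·.1 hux)
  · obtain rfl := hdouble y hy
    rcases hpos u (by omega) with rfl | rfl | rfl
    · exact hadj htu
    · obtain ⟨hac, hab⟩ := ha.resolve_left (not_not.2 htu)
      rcases hpos x (by omega) with rfl | rfl | rfl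
      · exact hac hux
      · exact hux.ne rfl
      · exact hab.elim (· hux) (· hxy)
    · obtain ⟨hbc, hba⟩ := hb.resolve_left (not_not.2 htu)
      rcases hpos x (by omega) with rfl | rfl | rfl
      · exact hbc hux
      · exact hba.elim (· hux) (· hxy)
      · exact hux.ne rfl
  · exact hxy ((hdouble x hx).trans (hdouble y hy).symm)
  · have := hcap x; omega

lemma AvoidsTwoDoubles.not_reachPattern (hcap : ∀ v, D v ≤ 2)
    (hzero : ∀ v, v ≠ c → v ≠ d → D v = 0) (h : AvoidsTwoDoubles G c d t) :
    ¬ReachPattern G D t := by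
  obtain ⟨htc, htd, hadjc, hadjd, hcommon⟩ := h
  have hpos : ∀ z, 1 ≤ D z → z = c ∨ z = d := fun z hz => by
    by_contra! h; have := hzero z h.1 h.2; omega
  have hnbr : ∀ z, G.Adj t z → D z = 0 := fun z hz => by
    by_contra h0
    rcases hpos z (by omega) with rfl | rfl
    · exact hadjc hz
    · exact hadjd hz
  rintro ((h | ⟨u, htu, hu⟩ | ⟨u, -, htu, -, hu, -⟩) | ⟨u, -, -, htu, -, -, hu, -, -⟩ |
    ⟨u, x, y, htu, hux, huy, hxy, hx, hy⟩ | ⟨u, x, -, -, hx⟩)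
  · have := hzero t htc htd; omega
  all_goals try (have := hnbr u htu; omega)
  · rcases hpos x (by omega) with rfl | rfl <;> rcases hpos y (by omega) with rfl | rfl
    · exact hxy rfl
    · exact hcommon u htu ⟨hux, huy⟩
    · exact hcommon u htu ⟨huy, hux⟩
    · exact hxy rfl
  · have := hcap x; omega

variable [Fintype V] [DecidableEq V]

lemma exists_support_subset_of_two_le (hc : 2 ≤ D c) (hsum : ∑ v, D v ≤ 4) :
    ∃ a b, ∀ v, v ≠ c → v ≠ a → v ≠ b → D v = 0 := by
  by_contra! h
  obtain ⟨x, hxc, -, -, hx⟩ := h c c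
  obtain ⟨y, hyc, hyx, -, hy⟩ := h x x
  obtain ⟨z, hzc, hzx, hzy, hz⟩ := h x y
  have hnodup : [c, x, y, z].Nodup := by
    simp [Ne.symm hxc, Ne.symm hyc, Ne.symm hzc, Ne.symm hyx, Ne.symm hzx, Ne.symm hzy]
  have := hnodup.sum_map_le_sum D
  simp at this; omega

theorem not_solvable_of_forall_avoids (hV : 4 < Fintype.card V)
    (h₁ : ∀ c a b, ∃ t, AvoidsOneDouble G c a b t)
    (h₂ : ∀ c d, c ≠ d → ∃ t, AvoidsTwoDoubles G c d t)
    (hcap : ∀ v, D v ≤ 2) (hsize : distSize D ≤ 4) : ¬Solvable G D := by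
  intro hsol
  suffices ∃ t, ¬ReachPattern G D t by
    obtain ⟨t, ht⟩ := this
    exact ht (.of_kReachable hsize (hsol t))
  by_cases hdouble : ∃ c, 2 ≤ D c
  · obtain ⟨c, hc⟩ := hdouble
    by_cases hsecond : ∃ d, d ≠ c ∧ 2 ≤ D d
    · obtain ⟨d, hdc, hd⟩ := hsecond
      obtain ⟨t, ht⟩ := h₂ c d hdc.symm
      refine ⟨t, ht.not_reachPattern hcap fun v hvc hvd => ?_⟩
      have := (show [c, d, v].Nodup by
        simp [Ne.symm hdc, Ne.symm hvc, Ne.symm hvd]).sum_map_le_sum D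
      simp [distSize] at this hsize; omega
    · push Not at hsecond
      obtain ⟨a, b, hzero⟩ := exists_support_subset_of_two_le hc hsize
      obtain ⟨t, ht⟩ := h₁ c a b
      exact ⟨t, ht.not_reachPattern hcap (fun v hv => by have := hsecond v hv; omega) hzero⟩
  · push Not at hdouble
    obtain ⟨t, -, ht⟩ := Finset.exists_lt_of_sum_lt (s := Finset.univ) (f := D) (g := fun _ => 1)
      (by simp [distSize] at hsize ⊢; omega)
    exact ⟨t, not_reachPattern_of_le_one (fun v => by have := hdouble v; omega) (by omega)⟩

end Avoid

section Reach

variable {V : Type*} [DecidableEq V] {G : SimpleGraph V} {D : V → ℕ} {a b t : V}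

lemma kReachable_one_of_pos (ht : 1 ≤ D t) : KReachable G D 1 t := ⟨D, .refl, ht⟩

lemma kReachable_one_of_adj_s11 (hat : G.Adj a t) (ha : 2 ≤ D a) : KReachable G D 1 t :=
  ⟨_, .single ⟨a, t, hat, ha, rfl⟩, by simp⟩

lemma kReachable_one_of_adj_adj (hab : G.Adj a b) (hbt : G.Adj b t) (ha : 2 ≤ D a)
    (hb : 1 ≤ D b) : KReachable G D 1 t := by
  refine ⟨_, .tail (.single ⟨a, b, hab, ha, rfl⟩) ⟨b, t, hbt, ?_, rfl⟩, by simp⟩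
  simp only [Function.update_self]
  omega

end Reach

namespace Hm

variable {m : ℕ}

@[simp] lemma adj_inl_inl {i j : Fin m} :
    (Hm m).Adj (.inl i) (.inl j) ↔ (i : ℕ) / 2 ≠ j / 2 := by
  simp [Hm, HmRel, Fin.ext_iff]; omega

@[simp] lemma adj_inr_inr {i j : Fin m} :
    (Hm m).Adj (.inr (.inl i)) (.inr (.inl j)) ↔ (i : ℕ) / 2 ≠ j / 2 := by
  simp [Hm, HmRel, Fin.ext_iff]; omega

@[simp] lemma adj_inl_inr {i j : Fin m} :
    (Hm m).Adj (.inl i) (.inr (.inl j)) ↔ (i : ℕ) = j ∧ (i : ℕ) % 2 = 1 := by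
  simp [Hm, HmRel, Fin.ext_iff]

@[simp] lemma adj_inr_inl {i j : Fin m} :
    (Hm m).Adj (.inr (.inl i)) (.inl j) ↔ (i : ℕ) = j ∧ (i : ℕ) % 2 = 1 := by
  rw [SimpleGraph.adj_comm, adj_inl_inr]; omega

@[simp] lemma adj_inl_w {i : Fin m} {u : Unit} :
    (Hm m).Adj (.inl i) (.inr (.inr u)) ↔ (i : ℕ) % 2 = 0 := by
  simp [Hm, HmRel]

@[simp] lemma adj_w_inl {i : Fin m} {u : Unit} :
    (Hm m).Adj (.inr (.inr u)) (.inl i) ↔ (i : ℕ) % 2 = 0 := by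
  rw [SimpleGraph.adj_comm, adj_inl_w]

@[simp] lemma adj_inr_w {i : Fin m} {u : Unit} :
    (Hm m).Adj (.inr (.inl i)) (.inr (.inr u)) ↔ (i : ℕ) % 2 = 0 := by
  simp [Hm, HmRel]

@[simp] lemma adj_w_inr {i : Fin m} {u : Unit} :
    (Hm m).Adj (.inr (.inr u)) (.inr (.inl i)) ↔ (i : ℕ) % 2 = 0 := by
  rw [SimpleGraph.adj_comm, adj_inr_w]

@[simp] lemma not_adj_w_w {u u' : Unit} : ¬(Hm m).Adj (.inr (.inr u)) (.inr (.inr u')) := by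
  simp [Hm]

def swap : Hm m ≃g Hm m where
  toFun
    | .inl i => .inr (.inl i)
    | .inr (.inl i) => .inl i
    | .inr (.inr u) => .inr (.inr u)
  invFun
    | .inl i => .inr (.inl i)
    | .inr (.inl i) => .inl i
    | .inr (.inr u) => .inr (.inr u)
  left_inv := by rintro (i | i | u) <;> rfl
  right_inv := by rintro (i | i | u) <;> rfl
  map_rel_iff' := by rintro (i | i | u) (j | j | u') <;> simp

/-- The other index in the block `{2k, 2k + 1}` of `i`. -/
def mate (he : Even m) (i : Fin m) : Fin m :=
  ⟨2 * (i / 2) + 1 - i % 2, by obtain ⟨r, hr⟩ := he; omega⟩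

lemma exists_avoidsOneDouble_inl (he : Even m) (i : Fin m) (a b : Fin m ⊕ (Fin m ⊕ Unit)) :
    ∃ t, AvoidsOneDouble (Hm m) (.inl i) a b t := by
  by_contra! h
  have hw := h (.inr (.inr ()))
  have hu := h (.inl (mate he i))
  have hv := h (.inr (.inl (mate he i)))
  rcases a with j | j | ⟨⟩ <;> rcases b with k | k | ⟨⟩
  · have ha := h (.inr (.inl (mate he j)))
    simp [AvoidsOneDouble, mate] at hv ha; omega
  · have ha := h (.inr (.inl (mate he j)))
    simp [AvoidsOneDouble, mate, Fin.ext_iff] at hw hu hv ha; omega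
  · have ha := h (.inr (.inl (mate he j)))
    simp [AvoidsOneDouble, mate] at hv ha; omega
  · have hb := h (.inr (.inl (mate he k)))
    simp [AvoidsOneDouble, mate, Fin.ext_iff] at hw hu hv hb; omega
  · simp [AvoidsOneDouble, mate, Fin.ext_iff] at hu; omega
  · simp [AvoidsOneDouble, mate, Fin.ext_iff] at hu; omega
  · have hb := h (.inr (.inl (mate he k)))
    simp [AvoidsOneDouble, mate] at hv hb; omega
  · simp [AvoidsOneDouble, mate, Fin.ext_iff] at hu; omega
  · simp [AvoidsOneDouble, mate, Fin.ext_iff] at hu; omega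

lemma exists_avoidsOneDouble_w (hm : 4 ≤ m) (he : Even m) (a b : Fin m ⊕ (Fin m ⊕ Unit)) :
    ∃ t, AvoidsOneDouble (Hm m) (.inr (.inr ())) a b t := by
  by_contra! h
  have hu₁ := h (.inl ⟨1, by omega⟩)
  have hv₁ := h (.inr (.inl ⟨1, by omega⟩))
  have hu₃ := h (.inl ⟨3, by omega⟩)
  have hv₃ := h (.inr (.inl ⟨3, by omega⟩))
  rcases a with j | j | ⟨⟩ <;> rcases b with k | k | ⟨⟩
  · simp [AvoidsOneDouble] at hv₁ hv₃; omega
  · have hb := h (.inr (.inl (mate he k)))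
    simp [AvoidsOneDouble, mate, Fin.ext_iff] at hv₁ hv₃ hb; omega
  · simp [AvoidsOneDouble] at hv₁; omega
  · have ha := h (.inr (.inl (mate he j)))
    simp [AvoidsOneDouble, mate, Fin.ext_iff] at hv₁ hv₃ ha; omega
  · simp [AvoidsOneDouble] at hu₁ hu₃; omega
  · simp [AvoidsOneDouble] at hu₁; omega
  · simp [AvoidsOneDouble] at hv₁; omega
  · simp [AvoidsOneDouble] at hu₁; omega
  · simp [AvoidsOneDouble] at hu₁

lemma exists_avoidsOneDouble (hm : 4 ≤ m) (he : Even m) (c a b : Fin m ⊕ (Fin m ⊕ Unit)) :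
    ∃ t, AvoidsOneDouble (Hm m) c a b t := by
  rcases c with i | i | ⟨⟩
  · exact exists_avoidsOneDouble_inl he i a b
  · obtain ⟨t, ht⟩ := exists_avoidsOneDouble_inl he i (swap.symm a) (swap.symm b)
    have := ht.map swap
    rw [RelIso.apply_symm_apply, RelIso.apply_symm_apply] at this
    exact ⟨swap t, this⟩
  · exact exists_avoidsOneDouble_w hm he a b

lemma exists_avoidsTwoDoubles_inl_inl (he : Even m) {i j : Fin m} (hij : i ≠ j) :
    ∃ t, AvoidsTwoDoubles (Hm m) (.inl i) (.inl j) t := by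
  have hij : (i : ℕ) ≠ j := Fin.val_ne_of_ne hij
  by_cases hj : (j : ℕ) = mate he i ∧ (j : ℕ) % 2 = 1
  · refine ⟨.inr (.inl (mate he j)), ?_⟩
    simp [AvoidsTwoDoubles, mate] at hj ⊢
    and_intros <;> intros <;> omega
  · refine ⟨.inr (.inl (mate he i)), ?_⟩
    simp [AvoidsTwoDoubles, mate] at hj ⊢
    and_intros <;> intros <;> omega

lemma exists_avoidsTwoDoubles_inl_inr (he : Even m) (i j : Fin m) :
    ∃ t, AvoidsTwoDoubles (Hm m) (.inl i) (.inr (.inl j)) t := by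
  by_cases hj : (j : ℕ) % 2 = 0 ∨ i = j
  · refine ⟨.inl (mate he i), ?_⟩
    simp [AvoidsTwoDoubles, mate, Fin.ext_iff] at hj ⊢
    and_intros <;> intros <;> omega
  by_cases hi : (i : ℕ) % 2 = 0
  · refine ⟨.inr (.inl (mate he j)), ?_⟩
    simp [AvoidsTwoDoubles, mate, Fin.ext_iff] at hi hj ⊢
    and_intros <;> intros <;> omega
  · refine ⟨.inr (.inr ()), ?_⟩
    simp [AvoidsTwoDoubles, Fin.ext_iff] at hi hj ⊢
    and_intros <;> intros <;> omega

lemma exists_avoidsTwoDoubles_inl_w (hm : 4 ≤ m) (i : Fin m) :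
    ∃ t, AvoidsTwoDoubles (Hm m) (.inl i) (.inr (.inr ())) t := by
  by_cases hi : (i : ℕ) = 1
  · refine ⟨.inr (.inl ⟨3, by omega⟩), ?_⟩
    simp [AvoidsTwoDoubles] at hi ⊢
    and_intros <;> intros <;> omega
  · refine ⟨.inr (.inl ⟨1, by omega⟩), ?_⟩
    simp [AvoidsTwoDoubles] at hi ⊢
    and_intros <;> intros <;> omega

lemma exists_avoidsTwoDoubles (hm : 4 ≤ m) (he : Even m) {c d : Fin m ⊕ (Fin m ⊕ Unit)}
    (hcd : c ≠ d) : ∃ t, AvoidsTwoDoubles (Hm m) c d t := by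
  have hswap {c d : Fin m ⊕ (Fin m ⊕ Unit)} :
      (∃ t, AvoidsTwoDoubles (Hm m) c d t) → ∃ t, AvoidsTwoDoubles (Hm m) (swap c) (swap d) t :=
    fun ⟨t, ht⟩ => ⟨swap t, ht.map swap⟩
  have hsymm {c d : Fin m ⊕ (Fin m ⊕ Unit)} :
      (∃ t, AvoidsTwoDoubles (Hm m) c d t) → ∃ t, AvoidsTwoDoubles (Hm m) d c t :=
    fun ⟨t, ht⟩ => ⟨t, ht.symm⟩
  rcases c with i | i | ⟨⟩ <;> rcases d with j | j | ⟨⟩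
  · exact exists_avoidsTwoDoubles_inl_inl he (by simpa using hcd)
  · exact exists_avoidsTwoDoubles_inl_inr he i j
  · exact exists_avoidsTwoDoubles_inl_w hm i
  · exact hsymm (exists_avoidsTwoDoubles_inl_inr he j i)
  · exact hswap (exists_avoidsTwoDoubles_inl_inl he (by simpa using hcd))
  · exact hswap (exists_avoidsTwoDoubles_inl_w hm i)
  · exact hsymm (exists_avoidsTwoDoubles_inl_w hm j)
  · exact hsymm (hswap (exists_avoidsTwoDoubles_inl_w hm j))
  · exact absurd rfl hcd

theorem not_solvable_of_distSize_le_four (hm : 4 ≤ m) (he : Even m)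
    {D : Fin m ⊕ (Fin m ⊕ Unit) → ℕ} (hcap : ∀ v, D v ≤ 2) (hsize : distSize D ≤ 4) :
    ¬Solvable (Hm m) D :=
  not_solvable_of_forall_avoids (by simp; omega) (exists_avoidsOneDouble hm he)
    (fun _ _ => exists_avoidsTwoDoubles hm he) hcap hsize

/-- Two pebbles on `w` and on `u_2`, one on `v_2`. -/
def five : Fin m ⊕ (Fin m ⊕ Unit) → ℕ
  | .inl i => if (i : ℕ) = 1 then 2 else 0
  | .inr (.inl i) => if (i : ℕ) = 1 then 1 else 0
  | .inr (.inr _) => 2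

lemma five_le_two (v : Fin m ⊕ (Fin m ⊕ Unit)) : five v ≤ 2 := by
  rcases v with i | i | u <;> simp only [five] <;> (try split_ifs) <;> omega

lemma distSize_five (hm : 1 < m) : distSize (five (m := m)) = 5 := by
  simp [distSize, five, Fin.sum_univ_eq_sum_range (fun i => if i = 1 then 2 else 0),
    Fin.sum_univ_eq_sum_range (fun i => if i = 1 then 1 else 0), hm]

lemma solvable_five (hm : 1 < m) : Solvable (Hm m) five := by
  rintro (i | i | u)
  · by_cases hi : (i : ℕ) = 1
    · exact kReachable_one_of_pos (by simp [five, hi])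
    by_cases hpar : (i : ℕ) % 2 = 0
    · exact kReachable_one_of_adj_s11 (a := .inr (.inr ())) (by simpa using hpar) (by simp [five])
    · exact kReachable_one_of_adj_s11 (a := .inl ⟨1, hm⟩) (by simp; omega) (by simp [five])
  · by_cases hi : (i : ℕ) = 1
    · exact kReachable_one_of_pos (by simp [five, hi])
    by_cases hpar : (i : ℕ) % 2 = 0
    · exact kReachable_one_of_adj_s11 (a := .inr (.inr ())) (by simpa using hpar) (by simp [five])
    · exact kReachable_one_of_adj_adj (a := .inl ⟨1, hm⟩) (b := .inr (.inl ⟨1, hm⟩)) (by simp)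
        (by simp; omega) (by simp [five]) (by simp [five])
  · exact kReachable_one_of_pos (by simp [five])

end Hm

theorem Hm_restricted_eq_five (m : ℕ) (hm : 4 ≤ m) (heven : Even m) :
    5 ≤ optPebblingRes (Hm m) 2 ∧ optPebblingRes (Hm m) 2 = 5 := by
  have hfive : 5 ∈ {n | ∃ D : Fin m ⊕ (Fin m ⊕ Unit) → ℕ,
      (∀ v, D v ≤ 2) ∧ Solvable (Hm m) D ∧ distSize D = n} :=
    ⟨Hm.five, Hm.five_le_two, Hm.solvable_five (by omega), Hm.distSize_five (by omega)⟩
  have hlower : 5 ≤ optPebblingRes (Hm m) 2 := by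
    refine le_csInf ⟨5, hfive⟩ fun n ⟨D, hcap, hsol, hn⟩ => ?_
    by_contra! hlt
    exact Hm.not_solvable_of_distSize_le_four hm heven hcap (by omega) hsol
  exact ⟨hlower, le_antisymm (Nat.sInf_le hfive) hlower⟩
end

section
/- For every graph G, π*_2(G) ≤ γ_R(G), the Roman domination number of G. -/
open Finset

/-- The Roman domination number of a graph. -/
noncomputable def romanDominationNumber {V : Type*} [Fintype V] (G : SimpleGraph V) : ℕ :=
  sInf {n | ∃ f : V → ℕ, (∀ v, f v ≤ 2) ∧
    (∀ v, f v = 0 → ∃ u, G.Adj u v ∧ f u = 2) ∧ ∑ v, f v = n}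

section

variable {V : Type*} [DecidableEq V] {G : SimpleGraph V}

theorem kReachable_of_le {D : V → ℕ} {k : ℕ} {v : V} (h : k ≤ D v) : KReachable G D k v :=
  ⟨D, .refl, h⟩

theorem kReachable_add_one_of_adj {D : V → ℕ} {u v : V} (hadj : G.Adj u v) (hu : 2 ≤ D u) :
    KReachable G D (D v + 1) v :=
  ⟨_, .single ⟨u, v, hadj, hu, rfl⟩, by simp⟩

theorem solvable_of_forall_eq_zero_exists_adj_two {D : V → ℕ}
    (hdom : ∀ v, D v = 0 → ∃ u, G.Adj u v ∧ D u = 2) : Solvable G D := by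
  intro v
  by_cases hv : D v = 0
  · obtain ⟨u, hadj, hu⟩ := hdom v hv
    simpa [hv] using kReachable_add_one_of_adj hadj hu.ge
  · exact kReachable_of_le (Nat.one_le_iff_ne_zero.mpr hv)

theorem optPebblingRes_le_distSize [Fintype V] {D : V → ℕ} {t : ℕ} (ht : ∀ v, D v ≤ t)
    (hD : Solvable G D) : optPebblingRes G t ≤ distSize D :=
  Nat.sInf_le ⟨D, ht, hD, rfl⟩

end

/-- The constant function `2` is Roman dominating, so the infimum is attained (it is not the
junk value `sInf ∅ = 0`). -/
theorem exists_romanDomination_sum_eq {V : Type*} [Fintype V] (G : SimpleGraph V) :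
    ∃ f : V → ℕ, (∀ v, f v ≤ 2) ∧ (∀ v, f v = 0 → ∃ u, G.Adj u v ∧ f u = 2) ∧
      ∑ v, f v = romanDominationNumber G :=
  Nat.sInf_mem (s := {n | ∃ f : V → ℕ, (∀ v, f v ≤ 2) ∧
    (∀ v, f v = 0 → ∃ u, G.Adj u v ∧ f u = 2) ∧ ∑ v, f v = n})
    ⟨∑ _ : V, 2, fun _ ↦ 2, fun _ ↦ le_rfl, fun _ h ↦ absurd h two_ne_zero, rfl⟩

theorem restricted_le_romanDomination {V : Type*} [Fintype V] [DecidableEq V]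
    (G : SimpleGraph V) :
    optPebblingRes G 2 ≤ romanDominationNumber G := by
  obtain ⟨f, hf_le, hf_dom, hf_sum⟩ := exists_romanDomination_sum_eq G
  calc optPebblingRes G 2 ≤ distSize f :=
        optPebblingRes_le_distSize hf_le (solvable_of_forall_eq_zero_exists_adj_two hf_dom)
    _ = romanDominationNumber G := hf_sum
end
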